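/- Define κ : ℝ → ℝ by κ(u) = 2(e^{|u|/2} − 1 − |u|/2)/(1 − e^{-u/2})² for u ≠ 0 and κ(0) = 1. Then κ is nondecreasing and continuous on ℝ. -/

import Mathlib

/-- The function `κ` from the Bernstein exponential condition lemma. -/
noncomputable def kappa (u : ℝ) : ℝ :=
  if u = 0 then 1
  else 2 * (Real.exp (|u| / 2) - 1 - |u| / 2) / (1 - Real.exp (-u / 2)) ^ 2

open Real Set Filter Topology

/-!
Away from `0`, `κ = N / D` with `N u = 2 (e^{|u|/2} - 1 - |u|/2)` and `D u = (1 - e^{-u/2})²`,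
both smooth on each side of `0` and vanishing at `0`. By the quotient rule, monotonicity on
`u > 0` reduces (with `t = u/2`) to `e^{2t} - 4e^t + 2t + 3 ≥ 0`, whose derivative is
`2(e^t - 1)² ≥ 0`, and on `u < 0` (with `s = -u/2`) to `sinh s ≥ s`. Continuity at `0` is
l'Hôpital's rule on each side: there `N'/D'` equals `e^u`, resp. `e^{u/2}`, which tends to `1`.
-/

lemma exp_sq_sub_four_mul_exp_add_nonneg {t : ℝ} (ht : 0 ≤ t) :
    0 ≤ exp t ^ 2 - 4 * exp t + 2 * t + 3 := by
  have hmono : Monotone fun x ↦ exp x ^ 2 - 4 * exp x + 2 * x + 3 := by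
    refine monotone_of_hasDerivAt_nonneg (f' := fun x ↦ 2 * (exp x - 1) ^ 2) (fun x ↦ ?_)
      fun x ↦ by positivity
    refine ((((hasDerivAt_exp x).pow 2).sub ((hasDerivAt_exp x).const_mul 4)).add
      ((hasDerivAt_id' x).const_mul 2)).add_const 3 |>.congr_deriv ?_
    ring
  have h := hmono ht
  norm_num at h
  linarith

lemma two_mul_mul_exp_add_one_le_exp_sq {s : ℝ} (hs : 0 ≤ s) :
    2 * s * exp s + 1 ≤ exp s ^ 2 := by
  have hsinh := self_le_sinh_iff.mpr hs
  rw [sinh_eq] at hsinh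
  have hinv : exp (-s) * exp s = 1 := by rw [← exp_add, neg_add_cancel, exp_zero]
  nlinarith [exp_pos s]

lemma monotoneOn_of_eqOn_div {f N D N' D' : ℝ → ℝ} {s : Set ℝ} (hs : Convex ℝ s)
    (hf : ContinuousOn f s) (hfND : EqOn f (fun x ↦ N x / D x) (interior s))
    (hN : ∀ x ∈ interior s, HasDerivAt N (N' x) x) (hD : ∀ x ∈ interior s, HasDerivAt D (D' x) x)
    (hD0 : ∀ x ∈ interior s, D x ≠ 0) (hND : ∀ x ∈ interior s, N x * D' x ≤ N' x * D x) :
    MonotoneOn f s :=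
  monotoneOn_of_hasDerivWithinAt_nonneg hs hf
    (fun x hx ↦ (((hN x hx).div (hD x hx) (hD0 x hx)).congr_of_eventuallyEq
      (hfND.eventuallyEq_of_mem (isOpen_interior.mem_nhds hx))).hasDerivWithinAt)
    fun x hx ↦ div_nonneg (sub_nonneg.mpr (hND x hx)) (sq_nonneg _)

noncomputable def kappaNum (u : ℝ) : ℝ := 2 * (exp (|u| / 2) - 1 - |u| / 2)

noncomputable def kappaDen (u : ℝ) : ℝ := (1 - exp (-u / 2)) ^ 2

lemma kappa_eqOn_div : EqOn kappa (fun u ↦ kappaNum u / kappaDen u) {0}ᶜ :=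
  fun _ hu ↦ if_neg hu

lemma continuous_kappaNum : Continuous kappaNum := by unfold kappaNum; fun_prop

lemma continuous_kappaDen : Continuous kappaDen := by unfold kappaDen; fun_prop

lemma one_sub_exp_neg_half_ne_zero {u : ℝ} (hu : u ≠ 0) : 1 - exp (-u / 2) ≠ 0 := by
  rw [sub_ne_zero, ne_comm, Ne, exp_eq_one_iff]
  contrapose! hu
  linarith

lemma kappaDen_ne_zero {u : ℝ} (hu : u ≠ 0) : kappaDen u ≠ 0 :=
  pow_ne_zero 2 (one_sub_exp_neg_half_ne_zero hu)

lemma hasDerivAt_kappaDen (u : ℝ) :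
    HasDerivAt kappaDen ((1 - exp (-u / 2)) * exp (-u / 2)) u := by
  have hexp : HasDerivAt (fun u ↦ exp (-u / 2)) (exp (-u / 2) * (-1 / 2)) u :=
    ((hasDerivAt_id' u).neg.div_const 2).exp
  refine (hexp.const_sub 1).pow 2 |>.congr_deriv ?_
  ring

lemma hasDerivAt_kappaNum_of_pos {u : ℝ} (hu : 0 < u) :
    HasDerivAt kappaNum (exp (u / 2) - 1) u := by
  have hhalf : HasDerivAt (fun u ↦ u / 2) (1 / 2) u := (hasDerivAt_id' u).div_const 2
  have h : HasDerivAt (fun u ↦ 2 * (exp (u / 2) - 1 - u / 2)) (exp (u / 2) - 1) u :=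
    ((hhalf.exp.sub_const 1).sub hhalf).const_mul 2 |>.congr_deriv (by ring)
  refine h.congr_of_eventuallyEq ?_
  filter_upwards [lt_mem_nhds hu] with v hv
  rw [kappaNum, abs_of_pos hv]

lemma hasDerivAt_kappaNum_of_neg {u : ℝ} (hu : u < 0) :
    HasDerivAt kappaNum (1 - exp (-u / 2)) u := by
  have hhalf : HasDerivAt (fun u ↦ -u / 2) (-1 / 2) u := (hasDerivAt_id' u).neg.div_const 2
  have h : HasDerivAt (fun u ↦ 2 * (exp (-u / 2) - 1 - -u / 2)) (1 - exp (-u / 2)) u :=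
    ((hhalf.exp.sub_const 1).sub hhalf).const_mul 2 |>.congr_deriv (by ring)
  refine h.congr_of_eventuallyEq ?_
  filter_upwards [gt_mem_nhds hu] with v hv
  rw [kappaNum, abs_of_neg hv, neg_div]

lemma tendsto_kappaNum_zero : Tendsto kappaNum (𝓝 0) (𝓝 0) :=
  continuous_kappaNum.tendsto' 0 0 (by simp [kappaNum])

lemma tendsto_kappaDen_zero : Tendsto kappaDen (𝓝 0) (𝓝 0) :=
  continuous_kappaDen.tendsto' 0 0 (by simp [kappaDen])

lemma tendsto_kappa_nhdsGT_zero : Tendsto kappa (𝓝[>] 0) (𝓝 1) := by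
  have hratio : ∀ u ≠ 0, (exp (u / 2) - 1) / ((1 - exp (-u / 2)) * exp (-u / 2)) = exp u := by
    intro u hu
    have h1 := one_sub_exp_neg_half_ne_zero hu
    have hinv : exp (u / 2) * exp (-u / 2) = 1 := by rw [← exp_add]; ring_nf; exact exp_zero
    have hsq : exp u = exp (u / 2) * exp (u / 2) := by rw [← exp_add]; ring_nf
    rw [hsq, div_eq_iff (mul_ne_zero h1 (exp_ne_zero _))]
    linear_combination (1 - exp (u / 2) * (1 - exp (-u / 2))) * hinv
  have hexp : Tendsto exp (𝓝[>] 0) (𝓝 1) :=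
    (continuous_exp.tendsto' 0 1 exp_zero).mono_left nhdsWithin_le_nhds
  have hlim := HasDerivAt.lhopital_zero_nhdsGT
    (eventually_nhdsWithin_of_forall fun u hu ↦ hasDerivAt_kappaNum_of_pos hu)
    (Eventually.of_forall hasDerivAt_kappaDen)
    (eventually_nhdsWithin_of_forall fun u hu ↦
      mul_ne_zero (one_sub_exp_neg_half_ne_zero (ne_of_gt hu)) (exp_ne_zero _))
    (tendsto_kappaNum_zero.mono_left nhdsWithin_le_nhds)
    (tendsto_kappaDen_zero.mono_left nhdsWithin_le_nhds)
    (hexp.congr' (eventually_nhdsWithin_of_forall fun u hu ↦ (hratio u (ne_of_gt hu)).symm))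
  refine hlim.congr' (eventually_nhdsWithin_of_forall fun u hu ↦ ?_)
  exact (kappa_eqOn_div (ne_of_gt hu)).symm

lemma tendsto_kappa_nhdsLT_zero : Tendsto kappa (𝓝[<] 0) (𝓝 1) := by
  have hratio : ∀ u ≠ 0,
      (1 - exp (-u / 2)) / ((1 - exp (-u / 2)) * exp (-u / 2)) = exp (u / 2) := by
    intro u hu
    rw [div_mul_cancel_left₀ (one_sub_exp_neg_half_ne_zero hu), ← exp_neg, neg_div, neg_neg]
  have hexp : Tendsto (fun u ↦ exp (u / 2)) (𝓝[<] 0) (𝓝 1) :=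
    ((continuous_exp.comp (continuous_id.div_const 2)).tendsto' 0 1 (by simp)).mono_left
      nhdsWithin_le_nhds
  have hlim := HasDerivAt.lhopital_zero_nhdsLT
    (eventually_nhdsWithin_of_forall fun u hu ↦ hasDerivAt_kappaNum_of_neg hu)
    (Eventually.of_forall hasDerivAt_kappaDen)
    (eventually_nhdsWithin_of_forall fun u hu ↦
      mul_ne_zero (one_sub_exp_neg_half_ne_zero (ne_of_lt hu)) (exp_ne_zero _))
    (tendsto_kappaNum_zero.mono_left nhdsWithin_le_nhds)
    (tendsto_kappaDen_zero.mono_left nhdsWithin_le_nhds)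
    (hexp.congr' (eventually_nhdsWithin_of_forall fun u hu ↦ (hratio u (ne_of_lt hu)).symm))
  refine hlim.congr' (eventually_nhdsWithin_of_forall fun u hu ↦ ?_)
  exact (kappa_eqOn_div (ne_of_lt hu)).symm

lemma continuous_kappa : Continuous kappa := by
  refine continuous_iff_continuousAt.2 fun x ↦ ?_
  rcases eq_or_ne x 0 with rfl | hx
  · have hkappa0 : kappa 0 = 1 := if_pos rfl
    rw [continuousAt_iff_continuous_left'_right', ContinuousWithinAt, ContinuousWithinAt,
      hkappa0]
    exact ⟨tendsto_kappa_nhdsLT_zero, tendsto_kappa_nhdsGT_zero⟩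
  · refine (continuous_kappaNum.continuousAt.div continuous_kappaDen.continuousAt
      (kappaDen_ne_zero hx)).congr ?_
    exact (kappa_eqOn_div.eventuallyEq_of_mem (isOpen_compl_singleton.mem_nhds hx)).symm

lemma kappaNum_mul_le_mul_kappaDen_of_pos {u : ℝ} (hu : 0 < u) :
    kappaNum u * ((1 - exp (-u / 2)) * exp (-u / 2)) ≤ (exp (u / 2) - 1) * kappaDen u := by
  rw [kappaNum, kappaDen, abs_of_pos hu, ← sub_nonneg]
  have hb0 : 0 < exp (-u / 2) := exp_pos _
  have hb1 : exp (-u / 2) ≤ 1 := exp_le_one_iff.2 (by linarith)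
  have hab : exp (u / 2) * exp (-u / 2) = 1 := by rw [← exp_add]; ring_nf; exact exp_zero
  have key : (exp (u / 2) - 1) * (1 - exp (-u / 2)) ^ 2
      - 2 * (exp (u / 2) - 1 - u / 2) * ((1 - exp (-u / 2)) * exp (-u / 2))
      = (1 - exp (-u / 2)) * exp (-u / 2)
        * (exp (u / 2) ^ 2 - 4 * exp (u / 2) + 2 * (u / 2) + 3) := by
    linear_combination (1 - exp (-u / 2)) * (1 - exp (u / 2)) * hab
  rw [key]
  exact mul_nonneg (mul_nonneg (sub_nonneg.2 hb1) hb0.le)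
    (exp_sq_sub_four_mul_exp_add_nonneg (by linarith))

lemma kappaNum_mul_le_mul_kappaDen_of_neg {u : ℝ} (hu : u < 0) :
    kappaNum u * ((1 - exp (-u / 2)) * exp (-u / 2)) ≤ (1 - exp (-u / 2)) * kappaDen u := by
  rw [kappaNum, kappaDen, abs_of_neg hu, ← sub_nonneg]
  have hb1 : 1 ≤ exp (-u / 2) := one_le_exp (by linarith)
  have key : (1 - exp (-u / 2)) * (1 - exp (-u / 2)) ^ 2
      - 2 * (exp (-u / 2) - 1 - -u / 2) * ((1 - exp (-u / 2)) * exp (-u / 2))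
      = (exp (-u / 2) - 1) * (exp (-u / 2) ^ 2 - (2 * (-u / 2) * exp (-u / 2) + 1)) := by
    ring
  rw [key]
  exact mul_nonneg (sub_nonneg.2 hb1)
    (sub_nonneg.2 (two_mul_mul_exp_add_one_le_exp_sq (by linarith)))

lemma monotoneOn_kappa_Ici : MonotoneOn kappa (Ici 0) := by
  refine monotoneOn_of_eqOn_div (N := kappaNum) (N' := fun u ↦ exp (u / 2) - 1) (convex_Ici 0)
    continuous_kappa.continuousOn ?_ ?_ (fun u _ ↦ hasDerivAt_kappaDen u) ?_ ?_ <;>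
    simp only [interior_Ici]
  · exact kappa_eqOn_div.mono fun u hu ↦ ne_of_gt hu
  · exact fun u hu ↦ hasDerivAt_kappaNum_of_pos hu
  · exact fun u hu ↦ kappaDen_ne_zero (ne_of_gt hu)
  · exact fun u hu ↦ kappaNum_mul_le_mul_kappaDen_of_pos hu

lemma monotoneOn_kappa_Iic : MonotoneOn kappa (Iic 0) := by
  refine monotoneOn_of_eqOn_div (N := kappaNum) (N' := fun u ↦ 1 - exp (-u / 2)) (convex_Iic 0)
    continuous_kappa.continuousOn ?_ ?_ (fun u _ ↦ hasDerivAt_kappaDen u) ?_ ?_ <;>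
    simp only [interior_Iic]
  · exact kappa_eqOn_div.mono fun u hu ↦ ne_of_lt hu
  · exact fun u hu ↦ hasDerivAt_kappaNum_of_neg hu
  · exact fun u hu ↦ kappaDen_ne_zero (ne_of_lt hu)
  · exact fun u hu ↦ kappaNum_mul_le_mul_kappaDen_of_neg hu

theorem stmt5 : Monotone kappa ∧ Continuous kappa :=
  ⟨monotoneOn_kappa_Iic.Iic_union_Ici monotoneOn_kappa_Ici, continuous_kappa⟩
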